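/- Let μ_k : [0,1]^d → ℝ for k in a finite set K, each satisfying the Hölder condition |μ_k(x) − μ_k(x')| ≤ L‖x−x'‖^γ. Let p be a hypercube of side 1/m and define k*(x) = argmax_{k∈K} μ_k(x). If an action k satisfies inf_{x∈p} μ_{k*(x*_p)}(x) − sup_{x∈p} μ_k(x) ≤ Δ (i.e., k is 'near optimal' for p), then for every x ∈ p, μ_{k*(x)}(x) − μ_k(x) ≤ Δ + 3L(√d/m)^γ. -/

import Mathlib

def unifCube (d m : ℕ) (k : Fin d → ℕ) : Set (EuclideanSpace ℝ (Fin d)) :=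
  {x | ∀ i, x i ∈ Set.Icc ((k i : ℝ) / m) (((k i : ℝ) + 1) / m)}

noncomputable def cubeCenter (d m : ℕ) (k : Fin d → ℕ) : EuclideanSpace ℝ (Fin d) :=
  WithLp.toLp 2 (fun i => ((k i : ℝ) + 1 / 2) / m)

/-!
The cube has diameter `√d / m`, so by the Hölder condition every `μ b` oscillates by at most
`E = L (√d / m) ^ γ` on it. With `c` the centre,
`μ (k* x) x ≤ μ (k* x) c + E ≤ μ (k* c) c + E ≤ inf μ (k* c) + 2E` and `sup μ a ≤ μ a x + E`,
so the regret at `x` exceeds the cell-level gap by at most `3E`.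
-/

theorem EuclideanSpace.norm_le_sqrt_card_mul {ι : Type*} [Fintype ι]
    {x : EuclideanSpace ℝ ι} {r : ℝ} (hr : 0 ≤ r) (hx : ∀ i, |x i| ≤ r) :
    ‖x‖ ≤ √(Fintype.card ι) * r := by
  rw [EuclideanSpace.norm_eq, Real.sqrt_le_iff, mul_pow, Real.sq_sqrt (Nat.cast_nonneg _)]
  refine ⟨by positivity, ?_⟩
  calc ∑ i, ‖x i‖ ^ 2 ≤ ∑ _i : ι, r ^ 2 :=
        Finset.sum_le_sum fun i _ => pow_le_pow_left₀ (norm_nonneg _) (hx i) 2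
    _ = Fintype.card ι * r ^ 2 := by simp

theorem cubeCenter_mem_unifCube (d m : ℕ) (k : Fin d → ℕ) :
    cubeCenter d m k ∈ unifCube d m k := fun i =>
  ⟨div_le_div_of_nonneg_right (by simp) m.cast_nonneg,
    div_le_div_of_nonneg_right (by linarith) m.cast_nonneg⟩

theorem abs_sub_le_of_mem_unifCube {d m : ℕ} {k : Fin d → ℕ} {x y : EuclideanSpace ℝ (Fin d)}
    (hx : x ∈ unifCube d m k) (hy : y ∈ unifCube d m k) (i : Fin d) :
    |x i - y i| ≤ 1 / m := by
  have hside : ((k i : ℝ) + 1) / m - k i / m = 1 / m := by ring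
  obtain ⟨hx₁, hx₂⟩ := hx i
  obtain ⟨hy₁, hy₂⟩ := hy i
  rw [abs_sub_le_iff]
  constructor <;> linarith

theorem norm_sub_le_of_mem_unifCube {d m : ℕ} {k : Fin d → ℕ} {x y : EuclideanSpace ℝ (Fin d)}
    (hx : x ∈ unifCube d m k) (hy : y ∈ unifCube d m k) :
    ‖x - y‖ ≤ √d / m := by
  have h := EuclideanSpace.norm_le_sqrt_card_mul (x := x - y) (r := 1 / m) (by positivity)
    fun i => (PiLp.sub_apply (x := x) (y := y) (i := i)).symm ▸ abs_sub_le_of_mem_unifCube hx hy i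
  rwa [Fintype.card_fin, ← div_eq_mul_one_div] at h

theorem sub_le_of_near_optimal {X K : Type*} {s : Set X} {μ : K → X → ℝ} {kstar : X → K}
    {c x : X} {a : K} {E Δ : ℝ}
    (hosc : ∀ b, ∀ y ∈ s, ∀ y' ∈ s, |μ b y - μ b y'| ≤ E)
    (hkstar : ∀ b, μ b c ≤ μ (kstar c) c) (hc : c ∈ s)
    (hnear : sInf (μ (kstar c) '' s) - sSup (μ a '' s) ≤ Δ) (hx : x ∈ s) (b : K) :
    μ b x - μ a x ≤ Δ + 3 * E := by
  have hInf : μ (kstar c) c - E ≤ sInf (μ (kstar c) '' s) := by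
    refine le_csInf ⟨_, Set.mem_image_of_mem _ hc⟩ ?_
    rintro _ ⟨y, hy, rfl⟩
    linarith [(abs_le.mp (hosc (kstar c) c hc y hy)).2]
  have hSup : sSup (μ a '' s) ≤ μ a x + E := by
    refine csSup_le ⟨_, Set.mem_image_of_mem _ hc⟩ ?_
    rintro _ ⟨y, hy, rfl⟩
    linarith [(abs_le.mp (hosc a y hy x hx)).2]
  linarith [(abs_le.mp (hosc b x hx c hc)).2, hkstar b]

theorem near_optimal_action_regret_general (d m : ℕ)
    (K : Type*)
    (μ : K → EuclideanSpace ℝ (Fin d) → ℝ) (L γ : ℝ) (hL : 0 < L) (hγ : 0 < γ)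
    (hHolder : ∀ (a : K) (x x' : EuclideanSpace ℝ (Fin d)),
      |μ a x - μ a x'| ≤ L * ‖x - x'‖ ^ γ)
    (kstar : EuclideanSpace ℝ (Fin d) → K)
    (hkstar : ∀ x a, μ a x ≤ μ (kstar x) x)
    (kk : Fin d → ℕ)
    (a : K) (Δ : ℝ)
    (hnear : sInf ((fun x => μ (kstar (cubeCenter d m kk)) x) '' unifCube d m kk)
        - sSup ((fun x => μ a x) '' unifCube d m kk) ≤ Δ) :
    ∀ x ∈ unifCube d m kk,
      μ (kstar x) x - μ a x ≤ Δ + 3 * L * (Real.sqrt d / m) ^ γ := by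
  intro x hx
  have hosc : ∀ b, ∀ y ∈ unifCube d m kk, ∀ y' ∈ unifCube d m kk,
      |μ b y - μ b y'| ≤ L * (√d / m) ^ γ := fun b y hy y' hy' =>
    (hHolder b y y').trans <| mul_le_mul_of_nonneg_left
      (Real.rpow_le_rpow (norm_nonneg _) (norm_sub_le_of_mem_unifCube hy hy') hγ.le) hL.le
  linarith [sub_le_of_near_optimal hosc (hkstar _) (cubeCenter_mem_unifCube d m kk) hnear hx
    (kstar x)]

theorem near_optimal_action_regret (d m : ℕ) (hd : 0 < d) (hm : 0 < m)
    (K : Type*) [Fintype K] [Nonempty K]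
    (μ : K → EuclideanSpace ℝ (Fin d) → ℝ) (L γ : ℝ) (hL : 0 < L) (hγ : 0 < γ)
    (hHolder : ∀ (a : K) (x x' : EuclideanSpace ℝ (Fin d)),
      |μ a x - μ a x'| ≤ L * ‖x - x'‖ ^ γ)
    (kstar : EuclideanSpace ℝ (Fin d) → K)
    (hkstar : ∀ x a, μ a x ≤ μ (kstar x) x)
    (kk : Fin d → ℕ) (hkk : ∀ i, kk i < m)
    (a : K) (Δ : ℝ)
    (hnear : sInf ((fun x => μ (kstar (cubeCenter d m kk)) x) '' unifCube d m kk)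
        - sSup ((fun x => μ a x) '' unifCube d m kk) ≤ Δ) :
    ∀ x ∈ unifCube d m kk,
      μ (kstar x) x - μ a x ≤ Δ + 3 * L * (Real.sqrt d / m) ^ γ :=
  near_optimal_action_regret_general d m K μ L γ hL hγ hHolder kstar hkstar kk a Δ hnear
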